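/- arXiv:2308.09097 — 9 statements merged into one kernel-verified Lean document; each statement's English description precedes it below -/
import Mathlib

section
/- A C¹ map f = (f₁,…,fₙ) : ℝⁿ → ℝⁿ is Laplacian (its Jacobian at every point is a symmetric matrix whose rows sum to zero) if and only if there exist g ∈ C²(ℝ^{n−1}) and a constant k ∈ ℝ such that f_i(x₁,…,xₙ) = ∂g/∂t_i (x₁ − xₙ, …, x_{n−1} − xₙ) for i = 1,…,n−1, and fₙ = −f₁ − ⋯ − f_{n−1} + k. -/
open scoped BigOperators

/-- A C¹ map whose Jacobian at every point is a symmetric matrix each of whose rows sums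
to zero (i.e. is a Laplacian matrix). -/
def IsLaplacianMap {n : ℕ} (f : (Fin n → ℝ) → Fin n → ℝ) : Prop :=
  ContDiff ℝ 1 f ∧
    ∀ x : Fin n → ℝ,
      (∀ i j : Fin n,
        fderiv ℝ (fun y => f y i) x (Pi.single j 1) =
          fderiv ℝ (fun y => f y j) x (Pi.single i 1)) ∧
      (∀ i : Fin n, ∑ j : Fin n, fderiv ℝ (fun y => f y i) x (Pi.single j 1) = 0)

/-!
The Jacobian `J` of a Laplacian map is symmetric with `J 1 = 0`, hence also `1ᵀ J = 0`: the map is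
invariant under translation along the diagonal `1`, and the sum of its components is a constant `k`.
So `f` is determined by its first `n` components on the hyperplane `xₙ = 0`; these form a `C¹` map
on `ℝⁿ` with symmetric Jacobian, i.e. a closed `1`-form, which by the Poincaré lemma is the
gradient of a `C²` function `g`. Conversely, with `D x = (xᵢ - xₙ)ᵢ`, the map
`x ↦ Dᵀ ∇g (D x) + k eₙ` has Jacobian `Dᵀ (∇²g) D`, which is symmetric by Schwarz's theorem and
kills `1` because `D 1 = 0`.
-/

open Matrix

noncomputable section

section Jacobian

variable {ι κ μ : Type*} [Fintype ι] [DecidableEq ι]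

def jacobian (f : (ι → ℝ) → κ → ℝ) (x : ι → ℝ) : Matrix κ ι ℝ :=
  LinearMap.toMatrix' (fderiv ℝ f x : (ι → ℝ) →ₗ[ℝ] κ → ℝ)

theorem jacobian_apply (f : (ι → ℝ) → κ → ℝ) (x : ι → ℝ) (i : κ) (j : ι) :
    jacobian f x i j = fderiv ℝ f x (Pi.single j 1) i :=
  rfl

theorem jacobian_mulVec (f : (ι → ℝ) → κ → ℝ) (x v : ι → ℝ) :
    jacobian f x *ᵥ v = fderiv ℝ f x v :=
  LinearMap.toMatrix'_mulVec _ v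

theorem jacobian_comp [Fintype κ] [DecidableEq κ] [Fintype μ] {f : (κ → ℝ) → μ → ℝ}
    {g : (ι → ℝ) → κ → ℝ} {x : ι → ℝ} (hf : DifferentiableAt ℝ f (g x))
    (hg : DifferentiableAt ℝ g x) :
    jacobian (fun y => f (g y)) x = jacobian f (g x) * jacobian g x := by
  rw [jacobian, fderiv_fun_comp x hf hg]
  exact LinearMap.toMatrix'_comp _ _

theorem jacobian_add_const [Fintype κ] (f : (ι → ℝ) → κ → ℝ) (c : κ → ℝ) (x : ι → ℝ) :
    jacobian (fun y => f y + c) x = jacobian f x := by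
  rw [jacobian, fderiv_add_const, jacobian]

theorem hasFDerivAt_matrix_mulVec (A : Matrix κ ι ℝ) (x : ι → ℝ) :
    HasFDerivAt (A *ᵥ ·) (LinearMap.toContinuousLinearMap (toLin' A)) x :=
  (LinearMap.toContinuousLinearMap (toLin' A)).hasFDerivAt

theorem contDiff_matrix_mulVec [Fintype κ] (A : Matrix κ ι ℝ) {n : WithTop ℕ∞} :
    ContDiff ℝ n (A *ᵥ ·) :=
  (LinearMap.toContinuousLinearMap (toLin' A)).contDiff

theorem jacobian_matrix_mulVec (A : Matrix κ ι ℝ) (x : ι → ℝ) : jacobian (A *ᵥ ·) x = A := by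
  rw [jacobian, (hasFDerivAt_matrix_mulVec A x).fderiv, LinearMap.coe_toContinuousLinearMap,
    LinearMap.toMatrix'_toLin']

theorem jacobian_matrix_mulVec_comp [Fintype κ] [DecidableEq κ] [Fintype μ] (A : Matrix μ κ ℝ)
    {f : (ι → ℝ) → κ → ℝ} {x : ι → ℝ} (hf : DifferentiableAt ℝ f x) :
    jacobian (fun y => A *ᵥ f y) x = A * jacobian f x := by
  rw [jacobian_comp (f := (A *ᵥ ·)) (hasFDerivAt_matrix_mulVec A _).differentiableAt hf,
    jacobian_matrix_mulVec]

theorem jacobian_comp_matrix_mulVec [Fintype κ] [DecidableEq κ] [Fintype μ] (A : Matrix κ ι ℝ)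
    {f : (κ → ℝ) → μ → ℝ} {x : ι → ℝ} (hf : DifferentiableAt ℝ f (A *ᵥ x)) :
    jacobian (fun y => f (A *ᵥ y)) x = jacobian f (A *ᵥ x) * A := by
  rw [jacobian_comp (g := (A *ᵥ ·)) hf (hasFDerivAt_matrix_mulVec A x).differentiableAt,
    jacobian_matrix_mulVec]

end Jacobian

namespace Matrix

variable {m n α : Type*} [Fintype n] [CommSemiring α]

def IsLaplacian (L : Matrix n n α) : Prop :=
  L.IsSymm ∧ L *ᵥ 1 = 0

theorem IsSymm.transpose_mul_mul [Fintype m] {B : Matrix n n α} (hB : B.IsSymm)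
    (A : Matrix n m α) : (Aᵀ * B * A).IsSymm := by
  rw [IsSymm, transpose_mul, transpose_mul, transpose_transpose, hB.eq, Matrix.mul_assoc]

theorem IsSymm.dotProduct_mulVec_comm {B : Matrix n n α} (hB : B.IsSymm) (v w : n → α) :
    v ⬝ᵥ B *ᵥ w = w ⬝ᵥ B *ᵥ v := by
  rw [dotProduct_mulVec, ← mulVec_transpose, hB.eq, dotProduct_comm]

theorem isLaplacian_transpose_mul_mul [Fintype m] {B : Matrix n n α} (hB : B.IsSymm)
    {A : Matrix n m α} (hA : A *ᵥ 1 = 0) : (Aᵀ * B * A).IsLaplacian :=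
  ⟨hB.transpose_mul_mul A, by rw [← mulVec_mulVec, hA, mulVec_zero]⟩

theorem IsLaplacian.sum_mulVec {L : Matrix n n α} (hL : L.IsLaplacian) (v : n → α) :
    ∑ i, (L *ᵥ v) i = 0 := by
  rw [← one_dotProduct, hL.1.dotProduct_mulVec_comm, hL.2, dotProduct_zero]

end Matrix

theorem isLaplacianMap_iff {m : ℕ} {f : (Fin m → ℝ) → Fin m → ℝ} :
    IsLaplacianMap f ↔ ContDiff ℝ 1 f ∧ ∀ x, (jacobian f x).IsLaplacian := by
  refine and_congr_right fun hf => forall_congr' fun x => ?_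
  have hJ : ∀ i j, fderiv ℝ (fun y => f y i) x (Pi.single j 1) = jacobian f x i j := fun i j => by
    rw [fderiv_apply ((hf.differentiable one_ne_zero) x)]
    rfl
  simp only [hJ, IsLaplacian, IsSymm.ext_iff, funext_iff, mulVec, dotProduct, Pi.one_apply, mul_one,
    Pi.zero_apply]
  exact and_congr_left' ⟨fun h i j => h j i, fun h i j => h j i⟩

theorem apply_add_smul_eq_of_fderiv_apply_eq_zero {E F : Type*} [NormedAddCommGroup E]
    [NormedSpace ℝ E] [NormedAddCommGroup F] [NormedSpace ℝ F] {f : E → F}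
    (hf : Differentiable ℝ f) {v : E} (hv : ∀ x, fderiv ℝ f x v = 0) (x : E) (c : ℝ) :
    f (x + c • v) = f x := by
  have hline : ∀ s : ℝ, HasDerivAt (fun s : ℝ => f (x + s • v)) 0 s := fun s => by
    have := (hf (x + s • v)).hasFDerivAt.comp_hasDerivAt s
      (((hasDerivAt_id s).smul_const v).const_add x)
    simpa [hv, Function.comp_def] using this
  simpa using is_const_of_deriv_eq_zero (fun s => (hline s).differentiableAt)
    (fun s => (hline s).deriv) c 0

theorem sum_apply_eq_of_isLaplacian {ι : Type*} [Fintype ι] [DecidableEq ι]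
    {f : (ι → ℝ) → ι → ℝ} (hf : Differentiable ℝ f) (hL : ∀ x, (jacobian f x).IsLaplacian)
    (x y : ι → ℝ) : ∑ i, f x i = ∑ i, f y i := by
  have hsum : ∀ x, HasFDerivAt (fun y => ∑ i, f y i)
      (∑ i, (ContinuousLinearMap.proj i).comp (fderiv ℝ f x)) x := fun x =>
    HasFDerivAt.fun_sum fun i _ => hasFDerivAt_pi'.1 (hf x).hasFDerivAt i
  refine is_const_of_fderiv_eq_zero (fun x => (hsum x).differentiableAt) (fun x => ?_) x y
  ext v
  simp [(hsum x).fderiv, ← jacobian_mulVec, (hL x).sum_mulVec]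

section Gradient

variable {ι : Type*} [Fintype ι] [DecidableEq ι]

local notation "piRingℝ" => ContinuousLinearEquiv.piRing (𝕜 := ℝ) (E := ℝ)

def piGradient (g : (ι → ℝ) → ℝ) (t : ι → ℝ) : ι → ℝ :=
  piRingℝ ι (fderiv ℝ g t)

theorem piGradient_apply (g : (ι → ℝ) → ℝ) (t : ι → ℝ) (i : ι) :
    piGradient g t i = fderiv ℝ g t (Pi.single i 1) :=
  rfl

theorem ContDiff.piGradient {g : (ι → ℝ) → ℝ} (hg : ContDiff ℝ 2 g) :
    ContDiff ℝ 1 (piGradient g) :=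
  (piRingℝ ι).contDiff.comp (hg.fderiv_right le_rfl)

theorem isSymm_jacobian_piGradient {g : (ι → ℝ) → ℝ} (hg : ContDiff ℝ 2 g) (t : ι → ℝ) :
    (jacobian (piGradient g) t).IsSymm := by
  have hd : HasFDerivAt (piGradient g)
      ((piRingℝ ι : ((ι → ℝ) →L[ℝ] ℝ) →L[ℝ] ι → ℝ).comp
        (fderiv ℝ (fderiv ℝ g) t)) t :=
    (piRingℝ ι).hasFDerivAt.comp t
      ((hg.fderiv_right le_rfl).differentiable one_ne_zero t).hasFDerivAt
  refine IsSymm.ext fun i j => ?_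
  simp only [jacobian_apply, hd.fderiv]
  exact (hg.contDiffAt.isSymmSndFDerivAt (by simp)) _ _

theorem exists_piGradient_eq {h : (ι → ℝ) → ι → ℝ} (hh : ContDiff ℝ 1 h)
    (hsymm : ∀ t, (jacobian h t).IsSymm) : ∃ g, ContDiff ℝ 2 g ∧ piGradient g = h := by
  set ω := fun t => (piRingℝ ι).symm (h t)
  have hω : ContDiff ℝ 1 ω := (piRingℝ ι).symm.contDiff.comp hh
  have hdω : ∀ t v w, fderiv ℝ ω t v w = w ⬝ᵥ jacobian h t *ᵥ v := by
    intro t v w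
    have hd : HasFDerivAt ω (((piRingℝ ι).symm :
        (ι → ℝ) →L[ℝ] (ι → ℝ) →L[ℝ] ℝ).comp (fderiv ℝ h t)) t :=
      (piRingℝ ι).symm.hasFDerivAt.comp t
        ((hh.differentiable one_ne_zero) t).hasFDerivAt
    rw [jacobian_mulVec, hd.fderiv]
    exact (LinearEquiv.piRing_symm_apply (R := ℝ) (M := ℝ) ℝ _ w).trans (by simp [dotProduct])
  obtain ⟨g, hg⟩ := convex_univ.exists_forall_hasFDerivAt_of_fderiv_symmetric isOpen_univ
    (hω.differentiable one_ne_zero).differentiableOn fun t _ v w => by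
      rw [hdω, hdω, (hsymm t).dotProduct_mulVec_comm]
  have hfd : fderiv ℝ g = ω := funext fun t => (hg t trivial).fderiv
  refine ⟨g, ?_, funext fun t => ?_⟩
  · rw [show (2 : WithTop ℕ∞) = 1 + 1 by norm_num, contDiff_succ_iff_fderiv, hfd]
    exact ⟨fun t => (hg t trivial).differentiableAt, by simp, hω⟩
  · simp [piGradient, hfd, ω]

end Gradient

section Differences

variable (n : ℕ)

def diffLastMatrix : Matrix (Fin n) (Fin (n + 1)) ℝ :=
  Matrix.of fun i => Pi.single i.castSucc 1 - Pi.single (Fin.last n) 1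

def castSuccMatrix : Matrix (Fin (n + 1)) (Fin n) ℝ :=
  Matrix.of fun a j => Pi.single (M := fun _ => ℝ) j.castSucc 1 a

variable {n}

theorem diffLastMatrix_mulVec (x : Fin (n + 1) → ℝ) :
    diffLastMatrix n *ᵥ x = fun i => x i.castSucc - x (Fin.last n) := by
  ext i
  change (Pi.single i.castSucc 1 - Pi.single (Fin.last n) 1) ⬝ᵥ x = _
  rw [sub_dotProduct, single_dotProduct, single_dotProduct, one_mul, one_mul]

theorem diffLastMatrix_mulVec_one : diffLastMatrix n *ᵥ 1 = 0 := by
  ext i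
  simp [diffLastMatrix_mulVec]

theorem transpose_diffLastMatrix_mulVec_castSucc (t : Fin n → ℝ) (i : Fin n) :
    ((diffLastMatrix n)ᵀ *ᵥ t) i.castSucc = t i := by
  simp [diffLastMatrix, mulVec, dotProduct, Pi.single_apply]

theorem transpose_diffLastMatrix_mulVec_last (t : Fin n → ℝ) :
    ((diffLastMatrix n)ᵀ *ᵥ t) (Fin.last n) = -∑ i, t i := by
  simp [diffLastMatrix, mulVec, dotProduct]

theorem transpose_castSuccMatrix_mulVec (y : Fin (n + 1) → ℝ) (i : Fin n) :
    ((castSuccMatrix n)ᵀ *ᵥ y) i = y i.castSucc := by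
  simp [castSuccMatrix, mulVec, dotProduct, Pi.single_apply]

theorem castSuccMatrix_mulVec_diffLastMatrix_mulVec (x : Fin (n + 1) → ℝ) :
    castSuccMatrix n *ᵥ (diffLastMatrix n *ᵥ x) = x + (-x (Fin.last n)) • 1 := by
  rw [diffLastMatrix_mulVec]
  ext a
  induction a using Fin.lastCases with
  | last =>
    simp [castSuccMatrix, mulVec, dotProduct, Pi.single_apply, (Fin.castSucc_ne_last _).symm]
  | cast a => simp [castSuccMatrix, mulVec, dotProduct, Pi.single_apply, sub_eq_add_neg]

theorem eq_transpose_diffLastMatrix_mulVec_add_single_iff {y : Fin (n + 1) → ℝ}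
    {v : Fin n → ℝ} {k : ℝ} :
    y = (diffLastMatrix n)ᵀ *ᵥ v + Pi.single (Fin.last n) k ↔
      (∀ i, y i.castSucc = v i) ∧ y (Fin.last n) = -∑ i : Fin n, y i.castSucc + k := by
  constructor
  · rintro rfl
    simp [transpose_diffLastMatrix_mulVec_castSucc, transpose_diffLastMatrix_mulVec_last,
      (Fin.castSucc_ne_last _)]
  · rintro ⟨hcast, hlast⟩
    ext a
    induction a using Fin.lastCases with
    | last => simp [transpose_diffLastMatrix_mulVec_last, hlast, hcast]
    | cast a => simp [transpose_diffLastMatrix_mulVec_castSucc, hcast, Fin.castSucc_ne_last]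

end Differences

theorem IsLaplacianMap.exists_potential {n : ℕ} {f : (Fin (n + 1) → ℝ) → Fin (n + 1) → ℝ}
    (hf : IsLaplacianMap f) :
    ∃ (g : (Fin n → ℝ) → ℝ) (k : ℝ), ContDiff ℝ 2 g ∧ ∀ x,
      f x = (diffLastMatrix n)ᵀ *ᵥ piGradient g (diffLastMatrix n *ᵥ x) +
        Pi.single (Fin.last n) k := by
  obtain ⟨hC, hL⟩ := isLaplacianMap_iff.mp hf
  have hdiff : Differentiable ℝ f := hC.differentiable one_ne_zero
  have hfE : ContDiff ℝ 1 fun t => f (castSuccMatrix n *ᵥ t) := hC.comp (contDiff_matrix_mulVec _)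
  set h := fun t => (castSuccMatrix n)ᵀ *ᵥ f (castSuccMatrix n *ᵥ t) with h_def
  have hh : ContDiff ℝ 1 h := (contDiff_matrix_mulVec _).comp hfE
  have hsymm : ∀ t, (jacobian h t).IsSymm := fun t => by
    rw [h_def, jacobian_matrix_mulVec_comp _ (hfE.differentiable one_ne_zero t),
      jacobian_comp_matrix_mulVec _ (hdiff _), ← Matrix.mul_assoc]
    exact (hL _).1.transpose_mul_mul _
  obtain ⟨g, hg, hgh⟩ := exists_piGradient_eq hh hsymm
  refine ⟨g, ∑ i, f 0 i, hg, fun x => eq_transpose_diffLastMatrix_mulVec_add_single_iff.mpr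
    ⟨fun i => ?_, ?_⟩⟩
  · have hdiag : ∀ y, fderiv ℝ f y 1 = 0 := fun y => by rw [← jacobian_mulVec, (hL y).2]
    simp only [hgh, h_def]
    rw [castSuccMatrix_mulVec_diffLastMatrix_mulVec,
      apply_add_smul_eq_of_fderiv_apply_eq_zero hdiff hdiag, transpose_castSuccMatrix_mulVec]
  · have hsum := sum_apply_eq_of_isLaplacian hdiff hL x 0
    rw [Fin.sum_univ_castSucc] at hsum
    linarith

theorem isLaplacianMap_of_eq_potential {n : ℕ} {f : (Fin (n + 1) → ℝ) → Fin (n + 1) → ℝ}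
    {g : (Fin n → ℝ) → ℝ} {k : ℝ} (hg : ContDiff ℝ 2 g)
    (hfg : ∀ x, f x = (diffLastMatrix n)ᵀ *ᵥ piGradient g (diffLastMatrix n *ᵥ x) +
        Pi.single (Fin.last n) k) :
    IsLaplacianMap f := by
  obtain rfl := funext hfg
  have hφ : ContDiff ℝ 1 fun x => piGradient g (diffLastMatrix n *ᵥ x) :=
    hg.piGradient.comp (contDiff_matrix_mulVec _)
  refine isLaplacianMap_iff.mpr
    ⟨((contDiff_matrix_mulVec _).comp hφ).add contDiff_const, fun x => ?_⟩
  rw [jacobian_add_const, jacobian_matrix_mulVec_comp _ (hφ.differentiable one_ne_zero x),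
    jacobian_comp_matrix_mulVec _ (hg.piGradient.differentiable one_ne_zero _), ← Matrix.mul_assoc]
  exact isLaplacian_transpose_mul_mul (isSymm_jacobian_piGradient hg _) diffLastMatrix_mulVec_one

end

theorem stmt_1_general (n : ℕ) (f : (Fin (n + 1) → ℝ) → Fin (n + 1) → ℝ) :
    IsLaplacianMap f ↔
      ∃ (g : (Fin n → ℝ) → ℝ) (k : ℝ), ContDiff ℝ 2 g ∧
        (∀ (x : Fin (n + 1) → ℝ) (i : Fin n),
          f x i.castSucc =
            fderiv ℝ g (fun j : Fin n => x j.castSucc - x (Fin.last n)) (Pi.single i 1)) ∧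
        (∀ x : Fin (n + 1) → ℝ,
          f x (Fin.last n) = -(∑ i : Fin n, f x i.castSucc) + k) := by
  simp only [← diffLastMatrix_mulVec, ← piGradient_apply]
  constructor
  · intro hf
    obtain ⟨g, k, hg, hfg⟩ := hf.exists_potential
    exact ⟨g, k, hg, fun x => (eq_transpose_diffLastMatrix_mulVec_add_single_iff.mp (hfg x)).1,
      fun x => (eq_transpose_diffLastMatrix_mulVec_add_single_iff.mp (hfg x)).2⟩
  · rintro ⟨g, k, hg, hcast, hlast⟩
    exact isLaplacianMap_of_eq_potential hg fun x =>
      eq_transpose_diffLastMatrix_mulVec_add_single_iff.mpr ⟨hcast x, hlast x⟩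

/-- Characterization of Laplacian maps: `f` is Laplacian iff there is a C² function `g` on
`ℝ^n` and a constant `k` with `f_i(x) = ∂g/∂t_i (x₁ - x_{n+1}, …, x_n - x_{n+1})` for
`i = 1, …, n` and `f_{n+1} = -f_1 - ⋯ - f_n + k`. -/
theorem stmt_1 (n : ℕ) (f : (Fin (n + 1) → ℝ) → Fin (n + 1) → ℝ)
    (hf : ContDiff ℝ 1 f) :
    IsLaplacianMap f ↔
      ∃ (g : (Fin n → ℝ) → ℝ) (k : ℝ), ContDiff ℝ 2 g ∧
        (∀ (x : Fin (n + 1) → ℝ) (i : Fin n),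
          f x i.castSucc =
            fderiv ℝ g (fun j : Fin n => x j.castSucc - x (Fin.last n)) (Pi.single i 1)) ∧
        (∀ x : Fin (n + 1) → ℝ,
          f x (Fin.last n) = -(∑ i : Fin n, f x i.castSucc) + k) :=
  stmt_1_general n f
end

section
/- A C¹ map f : ℝⁿ → ℝⁿ is a Laplacian map if and only if f is a gradient map f = ∇ḡ where ḡ(x₁,…,xₙ) = g(x₁ − xₙ, …, x_{n−1} − xₙ) + k·xₙ for some C² function g : ℝ^{n−1} → ℝ and constant k ∈ ℝ. -/
open scoped BigOperators

/-!
A Laplacian map has a symmetric Jacobian, so by the Poincaré lemma it is the gradient of a `C²`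
potential `G`; conversely the Jacobian of a gradient is a Hessian, hence symmetric. For `f = ∇G`,
symmetry turns the row sums of the Jacobian into the partial derivatives of `y ↦ ∂G/∂𝟙 (y)`, where
`𝟙` is the all-ones vector, so the rows sum to zero exactly when this directional derivative is a
constant `k`, i.e. when `G (y + c • 𝟙) = G y + c * k`. Such potentials are exactly the functions
`ḡ`, where `g` is the restriction of `G` to the hyperplane `yₙ = 0`.
-/

section NormedSpace

variable {E : Type*} [NormedAddCommGroup E] [NormedSpace ℝ E]

theorem fderiv_apply_const_eq {F H : Type*} [NormedAddCommGroup F] [NormedSpace ℝ F]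
    [NormedAddCommGroup H] [NormedSpace ℝ H] {ω : E → F →L[ℝ] H} {x : E}
    (hω : DifferentiableAt ℝ ω x) (v : E) (w : F) :
    fderiv ℝ (fun y => ω y w) x v = fderiv ℝ ω x v w := by
  simp [fderiv_clm_apply hω (differentiableAt_const w)]

theorem add_smul_eq_iff_fderiv_apply_eq {G : E → ℝ} (hG : Differentiable ℝ G) (u : E) (k : ℝ) :
    (∀ y (c : ℝ), G (y + c • u) = G y + c * k) ↔ ∀ y, fderiv ℝ G y u = k := by
  have hline : ∀ y (c : ℝ), HasDerivAt (fun c : ℝ => G (y + c • u)) (fderiv ℝ G (y + c • u) u) c :=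
    fun y c => (hG _).hasFDerivAt.comp_hasDerivAt c
      (((hasDerivAt_id c).smul_const u).const_add y |>.congr_deriv (one_smul ℝ u))
  constructor
  · intro h y
    have hk : HasDerivAt (fun c : ℝ => G (y + c • u)) k 0 := by
      simpa only [h y] using (hasDerivAt_mul_const k).const_add (G y)
    simpa using (hline y 0).unique hk
  · intro h y c
    have hconst : ∀ c : ℝ, HasDerivAt (fun c : ℝ => G (y + c • u) - c * k) 0 c := fun c => by
      simpa [h] using (hline y c).fun_sub (hasDerivAt_mul_const k)
    have := is_const_of_deriv_eq_zero (fun c => (hconst c).differentiableAt)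
      (fun c => (hconst c).deriv) c 0
    simp only [zero_smul, add_zero, zero_mul, sub_zero] at this
    linarith

end NormedSpace

section Coordinates

variable {ι : Type*} [Fintype ι]

def toCovector (v : ι → ℝ) : (ι → ℝ) →L[ℝ] ℝ :=
  ∑ i, v i • ContinuousLinearMap.proj i

theorem ContDiff.toCovector {n : WithTop ℕ∞} {f : (ι → ℝ) → ι → ℝ} (hf : ContDiff ℝ n f) :
    ContDiff ℝ n fun x => toCovector (f x) :=
  ContDiff.sum fun i _ => (contDiff_apply ℝ ℝ i |>.comp hf).smul contDiff_const

variable [DecidableEq ι]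

@[simp]
theorem toCovector_apply_single (v : ι → ℝ) (i : ι) :
    toCovector v (Pi.single i 1) = v i := by
  simp [toCovector, Pi.single_apply]

theorem sum_apply_single_one {M : Type*} [AddCommMonoid M] [Module ℝ M]
    (L : (ι → ℝ) →ₗ[ℝ] M) : ∑ j, L (Pi.single j 1) = L 1 := by
  rw [← map_sum]
  congr 1
  ext i
  simp [Finset.sum_apply, Pi.single_apply]

theorem apply_comm_of_single {B : (ι → ℝ) →L[ℝ] (ι → ℝ) →L[ℝ] ℝ}
    (h : ∀ i j, B (Pi.single i 1) (Pi.single j 1) = B (Pi.single j 1) (Pi.single i 1))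
    (v w : ι → ℝ) : B v w = B w v := by
  rw [pi_eq_sum_univ' v, pi_eq_sum_univ' w]
  simp only [map_sum, map_smul, FunLike.coe_sum, FunLike.coe_smul,
    Finset.sum_apply, Pi.smul_apply, smul_eq_mul, Finset.mul_sum]
  rw [Finset.sum_comm]
  refine Finset.sum_congr rfl fun i _ => Finset.sum_congr rfl fun j _ => ?_
  rw [h]
  ring

theorem eq_zero_of_apply_single {L : (ι → ℝ) →L[ℝ] ℝ} (h : ∀ i, L (Pi.single i 1) = 0) :
    L = 0 := by
  ext v
  rw [pi_eq_sum_univ' v]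
  simp [h]

end Coordinates

section Gradient

variable {N : ℕ}

theorem exists_potential_of_jacobian_symm {f : (Fin N → ℝ) → Fin N → ℝ} (hf : ContDiff ℝ 1 f)
    (hsymm : ∀ x i j, fderiv ℝ (fun y => f y i) x (Pi.single j 1) =
      fderiv ℝ (fun y => f y j) x (Pi.single i 1)) :
    ∃ G : (Fin N → ℝ) → ℝ, ContDiff ℝ 2 G ∧ ∀ x i, f x i = fderiv ℝ G x (Pi.single i 1) := by
  set ω := fun x => toCovector (f x)
  have hω : ContDiff ℝ 1 ω := hf.toCovector
  have hωdiff : Differentiable ℝ ω := hω.differentiable one_ne_zero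
  have hclosed : ∀ x v w, fderiv ℝ ω x v w = fderiv ℝ ω x w v := fun x =>
    apply_comm_of_single fun i j => by
      simp only [← fderiv_apply_const_eq (hωdiff x), ω, toCovector_apply_single, hsymm]
  obtain ⟨G, hG⟩ := convex_univ.exists_forall_hasFDerivAt_of_fderiv_symmetric isOpen_univ
    hωdiff.differentiableOn fun x _ => hclosed x
  have hfderiv : fderiv ℝ G = ω := funext fun x => (hG x trivial).fderiv
  refine ⟨G, ?_, fun x i => by simp [hfderiv, ω]⟩
  rw [show (2 : WithTop ℕ∞) = 1 + 1 by norm_num, contDiff_succ_iff_fderiv, hfderiv]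
  exact ⟨fun x => (hG x trivial).differentiableAt, by simp, hω⟩

theorem isLaplacianMap_iff_fderiv_apply_one_eq {G : (Fin N → ℝ) → ℝ} (hG : ContDiff ℝ 2 G)
    {f : (Fin N → ℝ) → Fin N → ℝ} (hfG : ∀ x i, f x i = fderiv ℝ G x (Pi.single i 1)) :
    IsLaplacianMap f ↔ ∃ k, ∀ y, fderiv ℝ G y 1 = k := by
  have hG' : ContDiff ℝ 1 (fderiv ℝ G) := hG.fderiv_right (by norm_num)
  have hG'diff : Differentiable ℝ (fderiv ℝ G) := hG'.differentiable one_ne_zero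
  have hf : f = fun x i => fderiv ℝ G x (Pi.single i 1) := funext fun x => funext (hfG x)
  subst hf
  have hessian_symm : ∀ x v w, fderiv ℝ (fderiv ℝ G) x v w = fderiv ℝ (fderiv ℝ G) x w v :=
    fun x => hG.contDiffAt.isSymmSndFDerivAt (by simp [minSmoothness_of_isRCLikeNormedField])
  have hrow : ∀ x i, ∑ j, fderiv ℝ (fun y => fderiv ℝ G y (Pi.single i 1)) x (Pi.single j 1) =
      fderiv ℝ (fun y => fderiv ℝ G y 1) x (Pi.single i 1) := fun x i => by
    simp only [fderiv_apply_const_eq (hG'diff x)]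
    rw [← hessian_symm]
    exact sum_apply_single_one ((fderiv ℝ (fderiv ℝ G) x).flip (Pi.single i 1)).toLinearMap
  have hjac_symm : ∀ x i j,
      fderiv ℝ (fun y => fderiv ℝ G y (Pi.single i 1)) x (Pi.single j 1) =
        fderiv ℝ (fun y => fderiv ℝ G y (Pi.single j 1)) x (Pi.single i 1) := fun x i j => by
    rw [fderiv_apply_const_eq (hG'diff x), fderiv_apply_const_eq (hG'diff x), hessian_symm]
  have hC1 : ContDiff ℝ 1 fun x i => fderiv ℝ G x (Pi.single i 1) :=
    contDiff_pi.2 fun i => hG'.clm_apply contDiff_const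
  have hdiff : Differentiable ℝ fun y => fderiv ℝ G y 1 :=
    hG'diff.clm_apply (differentiable_const _)
  calc IsLaplacianMap (fun x i => fderiv ℝ G x (Pi.single i 1))
      ↔ ∀ x i, fderiv ℝ (fun y => fderiv ℝ G y 1) x (Pi.single i 1) = 0 := by
        simp only [IsLaplacianMap, hrow]
        exact ⟨fun h x => (h.2 x).2, fun h => ⟨hC1, fun x => ⟨hjac_symm x, h x⟩⟩⟩
    _ ↔ ∀ x, fderiv ℝ (fun y => fderiv ℝ G y 1) x = 0 :=
        forall_congr' fun x => ⟨eq_zero_of_apply_single, fun h i => by simp [h]⟩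
    _ ↔ ∃ k, ∀ y, fderiv ℝ G y 1 = k :=
        ⟨fun h => ⟨_, fun y => is_const_of_fderiv_eq_zero hdiff h y 0⟩,
          fun ⟨k, hk⟩ x => by simp [funext hk]⟩

end Gradient

section DiagonalExtension

variable {n : ℕ}

/-- The function `ḡ` of the paper. -/
def diagonalExtension (g : (Fin n → ℝ) → ℝ) (k : ℝ) (y : Fin (n + 1) → ℝ) : ℝ :=
  g (fun j : Fin n => y j.castSucc - y (Fin.last n)) + k * y (Fin.last n)

theorem diagonalExtension_add_smul_one (g : (Fin n → ℝ) → ℝ) (k : ℝ) (y : Fin (n + 1) → ℝ)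
    (c : ℝ) : diagonalExtension g k (y + c • 1) = diagonalExtension g k y + c * k := by
  simp only [diagonalExtension, Pi.add_apply, Pi.smul_apply, Pi.one_apply, smul_eq_mul, mul_one,
    add_sub_add_right_eq_sub]
  ring

theorem ContDiff.diagonalExtension {m : WithTop ℕ∞} {g : (Fin n → ℝ) → ℝ} (hg : ContDiff ℝ m g)
    (k : ℝ) : ContDiff ℝ m (diagonalExtension g k) :=
  (hg.comp (contDiff_pi.2 fun _ => (contDiff_apply ℝ ℝ _).sub (contDiff_apply ℝ ℝ _))).add
    (contDiff_const.mul (contDiff_apply ℝ ℝ _))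

theorem contDiff_snoc_zero {m : WithTop ℕ∞} :
    ContDiff ℝ m fun u : Fin n → ℝ => (Fin.snoc u 0 : Fin (n + 1) → ℝ) := by
  refine contDiff_pi.2 fun i => Fin.lastCases ?_ (fun j => ?_) i
  · simpa using contDiff_const
  · simpa using contDiff_apply ℝ ℝ j

theorem diagonalExtension_snoc_zero {G : (Fin (n + 1) → ℝ) → ℝ} {k : ℝ}
    (hG : ∀ y (c : ℝ), G (y + c • 1) = G y + c * k) :
    diagonalExtension (fun u => G (Fin.snoc u 0)) k = G := by
  funext y
  have hy : y = Fin.snoc (fun j : Fin n => y j.castSucc - y (Fin.last n)) 0 +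
      y (Fin.last n) • 1 := by
    funext i
    refine Fin.lastCases ?_ (fun j => ?_) i <;> simp
  conv_rhs => rw [hy, hG]
  simp [diagonalExtension, mul_comm]

end DiagonalExtension

theorem stmt_3_general (n : ℕ) (f : (Fin (n + 1) → ℝ) → Fin (n + 1) → ℝ) :
    IsLaplacianMap f ↔
      ∃ (g : (Fin n → ℝ) → ℝ) (k : ℝ), ContDiff ℝ 2 g ∧
        ∀ (x : Fin (n + 1) → ℝ) (i : Fin (n + 1)),
          f x i =
            fderiv ℝ
              (fun y : Fin (n + 1) → ℝ =>
                g (fun j : Fin n => y j.castSucc - y (Fin.last n)) + k * y (Fin.last n))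
              x (Pi.single i 1) := by
  constructor
  · intro hL
    obtain ⟨G, hG, hfG⟩ := exists_potential_of_jacobian_symm hL.1 fun x => (hL.2 x).1
    obtain ⟨k, hk⟩ := (isLaplacianMap_iff_fderiv_apply_one_eq hG hfG).1 hL
    have hshift := (add_smul_eq_iff_fderiv_apply_eq (hG.differentiable two_ne_zero) 1 k).2 hk
    refine ⟨fun u => G (Fin.snoc u 0), k, hG.comp contDiff_snoc_zero, ?_⟩
    intro x i
    convert hfG x i using 3
    exact diagonalExtension_snoc_zero hshift
  · rintro ⟨g, k, hg, hfg⟩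
    have hG := hg.diagonalExtension k
    refine (isLaplacianMap_iff_fderiv_apply_one_eq hG hfg).2 ⟨k, ?_⟩
    exact (add_smul_eq_iff_fderiv_apply_eq (hG.differentiable two_ne_zero) 1 k).1
      (diagonalExtension_add_smul_one g k)

/-- `f` is a Laplacian map iff `f = ∇ḡ` where
`ḡ(x) = g(x₁ - x_{n+1}, …, x_n - x_{n+1}) + k x_{n+1}` for some C² function `g` and
constant `k`. -/
theorem stmt_3 (n : ℕ) (f : (Fin (n + 1) → ℝ) → Fin (n + 1) → ℝ)
    (hf : ContDiff ℝ 1 f) :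
    IsLaplacianMap f ↔
      ∃ (g : (Fin n → ℝ) → ℝ) (k : ℝ), ContDiff ℝ 2 g ∧
        ∀ (x : Fin (n + 1) → ℝ) (i : Fin (n + 1)),
          f x i =
            fderiv ℝ
              (fun y : Fin (n + 1) → ℝ =>
                g (fun j : Fin n => y j.castSucc - y (Fin.last n)) + k * y (Fin.last n))
              x (Pi.single i 1) :=
  stmt_3_general n f
end

section
/- Consider a bidirected network graph G on n cells and an admissible map f : ℝⁿ → ℝⁿ with additive structure, f_c(x) = ∑_{d≠c} φ_{cd}(x_c, x_d), where each φ_{cd} is C¹. If f is a Laplacian map, then each coupling function depends only on the difference of its arguments and is odd: f_c(x) = k_c + ∑_{d ∈ I(c)} φ_{cd}(x_d − x_c) with φ_{cd}(−t) = −φ_{cd}(t) for all t, and φ_{cd} = φ_{dc}. -/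
open scoped BigOperators

/-! Since each row of the Jacobian sums to zero, every `f_c` is invariant under adding the same
constant to all coordinates; translating by `-x_c` turns the additive form into
`f_c(x) = ∑_{d ≠ c} φ_{cd}(0, x_d - x_c)`. In this form `∂f_c/∂x_d (x) = φ_{cd}(0, ·)'(x_d - x_c)`,
so symmetry of the Jacobian together with `φ_{cd} = φ_{dc}` makes `φ_{cd}(0, ·)'` even, and
`φ_{cd}(0, ·) - φ_{cd}(0, 0)` is therefore odd. -/

open Finset

theorem Differentiable.apply_add_smul_of_fderiv_apply_eq_zero {E F : Type*}
    [NormedAddCommGroup E] [NormedSpace ℝ E] [NormedAddCommGroup F] [NormedSpace ℝ F]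
    {g : E → F} (hg : Differentiable ℝ g) {v : E} (hv : ∀ x, fderiv ℝ g x v = 0)
    (x : E) (t : ℝ) : g (x + t • v) = g x := by
  have hderiv : ∀ s : ℝ, HasDerivAt (fun s => g (x + s • v)) 0 s := fun s => by
    simpa [hv, Function.comp_def] using (hg (x + s • v)).hasFDerivAt.comp_hasDerivAt s
      (((hasDerivAt_id s).smul_const v).const_add x)
  simpa using is_const_of_deriv_eq_zero (fun s => (hderiv s).differentiableAt)
    (fun s => (hderiv s).deriv) t 0

theorem apply_neg_sub_apply_zero_of_deriv_even {g : ℝ → ℝ} (hg : Differentiable ℝ g)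
    (heven : ∀ t, deriv g (-t) = deriv g t) (t : ℝ) : g (-t) - g 0 = -(g t - g 0) := by
  have hderiv : ∀ s : ℝ, HasDerivAt (fun s => g s + g (-s)) 0 s := fun s => by
    simpa [heven] using (hg s).hasDerivAt.fun_add ((hg (-s)).hasDerivAt.comp s (hasDerivAt_neg s))
  have := is_const_of_deriv_eq_zero (fun s => (hderiv s).differentiableAt)
    (fun s => (hderiv s).deriv) t 0
  simp only [neg_zero] at this
  linarith

theorem fderiv_sum_comp_sub_apply_single {ι : Type*} [Fintype ι] [DecidableEq ι]
    {g : ι → ℝ → ℝ} {s : Finset ι} {c d : ι} (hd : d ∈ s) (hdc : d ≠ c) {x : ι → ℝ}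
    (hg : ∀ e ∈ s, DifferentiableAt ℝ (g e) (x e - x c)) :
    fderiv ℝ (fun y : ι → ℝ => ∑ e ∈ s, g e (y e - y c)) x (Pi.single d 1) =
      deriv (g d) (x d - x c) := by
  have hsum : HasFDerivAt (fun y : ι → ℝ => ∑ e ∈ s, g e (y e - y c))
      (∑ e ∈ s, deriv (g e) (x e - x c) •
        (ContinuousLinearMap.proj e - ContinuousLinearMap.proj c)) x :=
    HasFDerivAt.fun_sum fun e he =>
      (hg e he).hasDerivAt.comp_hasFDerivAt (f := fun y : ι → ℝ => y e - y c) x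
        ((hasFDerivAt_apply (𝕜 := ℝ) e x).fun_sub (hasFDerivAt_apply c x))
  rw [hsum.fderiv]
  simp [Pi.single_apply, hdc.symm, hd]

namespace IsLaplacianMap

variable {n : ℕ} {f : (Fin n → ℝ) → Fin n → ℝ}

theorem differentiable_apply (hf : IsLaplacianMap f) (i : Fin n) :
    Differentiable ℝ fun y => f y i :=
  differentiable_pi.1 (hf.1.differentiable one_ne_zero) i

theorem fderiv_apply_const_one (hf : IsLaplacianMap f) (x : Fin n → ℝ) (i : Fin n) :
    fderiv ℝ (fun y => f y i) x (fun _ => 1) = 0 := by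
  rw [← Finset.univ_sum_single (fun _ : Fin n => (1 : ℝ)), map_sum]
  exact (hf.2 x).2 i

theorem apply_add_const (hf : IsLaplacianMap f) (x : Fin n → ℝ) (t : ℝ) (i : Fin n) :
    f (x + fun _ => t) i = f x i := by
  have hconst : (t • fun _ : Fin n => (1 : ℝ)) = fun _ => t := by ext; simp
  simpa [hconst] using (hf.differentiable_apply i).apply_add_smul_of_fderiv_apply_eq_zero
    (fun x => hf.fderiv_apply_const_one x i) x t

end IsLaplacianMap

section AdditiveCoupling

variable {n : ℕ} {φ : Fin n → Fin n → ℝ → ℝ → ℝ} {f : (Fin n → ℝ) → Fin n → ℝ}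

theorem apply_eq_sum_coupling_sub
    (hf : ∀ x c, f x c = ∑ d ∈ univ.filter (fun d => d ≠ c), φ c d (x c) (x d))
    (hLap : IsLaplacianMap f) (x : Fin n → ℝ) (c : Fin n) :
    f x c = ∑ d ∈ univ.filter (fun d => d ≠ c), φ c d 0 (x d - x c) := by
  rw [← hLap.apply_add_const x (-x c) c, hf]
  simp [sub_eq_add_neg]

theorem deriv_coupling_zero_neg (hφ : ∀ c d, Differentiable ℝ (φ c d 0))
    (hbid : ∀ c d, φ c d = φ d c)
    (hf : ∀ x c, f x c = ∑ d ∈ univ.filter (fun d => d ≠ c), φ c d (x c) (x d))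
    (hLap : IsLaplacianMap f) {c d : Fin n} (hdc : d ≠ c) (t : ℝ) :
    deriv (φ c d 0) (-t) = deriv (φ c d 0) t := by
  have hform : ∀ i, (fun y => f y i) =
      fun y => ∑ e ∈ univ.filter (fun e => e ≠ i), φ i e 0 (y e - y i) :=
    fun i => funext fun y => apply_eq_sum_coupling_sub hf hLap y i
  -- at `x = t • e_d` the symmetric Jacobian entries are `φ_{cd}(0,·)'(t)` and `φ_{dc}(0,·)'(-t)`
  have hsym := (hLap.2 (Pi.single d t)).1 c d
  rw [hform, hform, fderiv_sum_comp_sub_apply_single (by simpa using hdc) hdc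
      (fun e _ => (hφ c e).differentiableAt),
    fderiv_sum_comp_sub_apply_single (by simpa using hdc.symm) hdc.symm
      (fun e _ => (hφ d e).differentiableAt), hbid d c] at hsym
  simpa [hdc, hdc.symm] using hsym.symm

end AdditiveCoupling

/-- For a bidirected network with additive structure
`f_c(x) = ∑_{d ≠ c} φ_{cd}(x_c, x_d)`, if `f` is a Laplacian map then each coupling
depends only on the difference of its arguments and is odd:
`f_c(x) = k_c + ∑_{d ≠ c} ψ_{cd}(x_d - x_c)` with `ψ_{cd}` odd and `ψ_{cd} = ψ_{dc}`. -/
theorem stmt_10 (n : ℕ) (φ : Fin n → Fin n → ℝ → ℝ → ℝ)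
    (hφC1 : ∀ c d : Fin n, ContDiff ℝ 1 (fun p : ℝ × ℝ => φ c d p.1 p.2))
    (hbid : ∀ c d : Fin n, φ c d = φ d c)
    (f : (Fin n → ℝ) → Fin n → ℝ)
    (hf : ∀ (x : Fin n → ℝ) (c : Fin n),
      f x c = ∑ d ∈ Finset.univ.filter (fun d => d ≠ c), φ c d (x c) (x d))
    (hLap : IsLaplacianMap f) :
    ∃ (k : Fin n → ℝ) (ψ : Fin n → Fin n → ℝ → ℝ),
      (∀ (c d : Fin n) (t : ℝ), ψ c d (-t) = -ψ c d t) ∧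
      (∀ c d : Fin n, ψ c d = ψ d c) ∧
      (∀ (x : Fin n → ℝ) (c : Fin n),
        f x c = k c + ∑ d ∈ Finset.univ.filter (fun d => d ≠ c), ψ c d (x d - x c)) := by
  have hφ : ∀ c d, Differentiable ℝ (φ c d 0) := fun c d =>
    ((hφC1 c d).differentiable one_ne_zero).comp
      ((differentiable_const 0).prodMk differentiable_id)
  -- `φ c c` does not enter `f`, so `ψ c c` is chosen to be `0`.
  refine ⟨fun c => ∑ d ∈ univ.filter (fun d => d ≠ c), φ c d 0 0,
    fun c d t => if c = d then 0 else φ c d 0 t - φ c d 0 0, ?_, ?_, ?_⟩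
  · intro c d t
    dsimp only
    split_ifs with hcd
    · simp
    · exact apply_neg_sub_apply_zero_of_deriv_even (hφ c d)
        (deriv_coupling_zero_neg hφ hbid hf hLap (Ne.symm hcd)) t
  · intro c d
    simp [eq_comm, hbid c d]
  · intro x c
    rw [apply_eq_sum_coupling_sub hf hLap x c, ← sum_add_distrib]
    refine sum_congr rfl fun d hd => ?_
    dsimp only
    rw [if_neg (mem_filter.1 hd).2.symm]
    ring
end

section
/- Let f : ℝⁿ → ℝⁿ be the vector field f_c(x) = ∑_{d ∈ I(c)} φ_{cd}(x_d − x_c) for a connected symmetric graph, where each φ_{cd} is odd with φ_{cd} = φ_{dc}. Suppose there exists ε > 0 such that α·φ_{cd}(α) > 0 for all edges (c,d) and all 0 < |α| < ε. If x satisfies |x_d − x_c| < ε for all edges (c,d) and ∑_c x_c = 0, with x ≠ 0, then f(x)·x < 0. -/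
open scoped BigOperators

/-- For a connected symmetric graph with odd couplings satisfying the sign condition
`α·φ_{cd}(α) > 0` for `0 < |α| < ε`: if `|x_d - x_c| < ε` on all edges, `∑ c, x_c = 0`
and `x ≠ 0`, then `f(x)·x < 0`, where `f_c(x) = ∑_{d ∈ I(c)} φ_{cd}(x_d - x_c)`. -/
theorem stmt_12 (n : ℕ) (G : SimpleGraph (Fin n)) [DecidableRel G.Adj]
    (hconn : G.Connected)
    (φ : Fin n → Fin n → ℝ → ℝ)
    (hφcont : ∀ c d, Continuous (φ c d))
    (hφodd : ∀ (c d : Fin n) (t : ℝ), φ c d (-t) = -φ c d t)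
    (hφsymm : ∀ c d, φ c d = φ d c)
    (ε : ℝ) (hε : 0 < ε)
    (hsign : ∀ c d : Fin n, G.Adj c d → ∀ α : ℝ, α ≠ 0 → |α| < ε → 0 < α * φ c d α)
    (x : Fin n → ℝ)
    (hx : ∀ c d : Fin n, G.Adj c d → |x d - x c| < ε)
    (hsum : ∑ c : Fin n, x c = 0) (hx0 : x ≠ 0) :
    (∑ c : Fin n, (∑ d ∈ G.neighborFinset c, φ c d (x d - x c)) * x c) < 0 := by
  classical
  -- there is an edge with different values
  have hedge : ∃ c d, G.Adj c d ∧ x d ≠ x c := by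
    by_contra h
    push_neg at h
    have hconst : ∀ a b : Fin n, x a = x b := by
      intro a b
      obtain ⟨w⟩ := hconn.preconnected a b
      induction w with
      | nil => rfl
      | cons hadj p ih => rw [← ih, h _ _ hadj]
    have hn : 0 < n := by
      rcases Nat.eq_zero_or_pos n with h0 | h0
      · exfalso; apply hx0; funext i; exact absurd i.2 (by omega)
      · exact h0
    have c0 : Fin n := ⟨0, hn⟩
    have hxc : ∀ a, x a = x c0 := fun a => hconst a c0
    have : (n : ℝ) * x c0 = 0 := by
      rw [← hsum]
      rw [Finset.sum_congr rfl (fun a _ => hxc a)]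
      simp [mul_comm]
    have hx0' : x c0 = 0 := by
      rcases mul_eq_zero.mp this with h' | h'
      · exact absurd h' (Nat.cast_ne_zero.mpr hn.ne')
      · exact h'
    apply hx0
    funext a; simp [hxc a, hx0']
  -- rewrite as double if-sum
  have hnf : ∀ c : Fin n, G.neighborFinset c = Finset.univ.filter (fun d => G.Adj c d) := by
    intro c; ext d; simp
  have h1 : (∑ c : Fin n, (∑ d ∈ G.neighborFinset c, φ c d (x d - x c)) * x c)
      = ∑ c : Fin n, ∑ d : Fin n, (if G.Adj c d then φ c d (x d - x c) * x c else 0) := by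
    refine Finset.sum_congr rfl fun c _ => ?_
    rw [Finset.sum_mul, hnf c, Finset.sum_filter]
  set S := ∑ c : Fin n, ∑ d : Fin n, (if G.Adj c d then φ c d (x d - x c) * x c else 0) with hS
  have h2 : S = -∑ c : Fin n, ∑ d : Fin n, (if G.Adj c d then φ c d (x d - x c) * x d else 0) := by
    rw [hS, Finset.sum_comm, ← Finset.sum_neg_distrib]
    refine Finset.sum_congr rfl fun c _ => ?_
    rw [← Finset.sum_neg_distrib]
    refine Finset.sum_congr rfl fun d _ => ?_
    by_cases hadj : G.Adj c d
    · have hadj' : G.Adj d c := hadj.symm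
      simp only [hadj, hadj', if_true]
      rw [hφsymm d c]
      have : x c - x d = -(x d - x c) := by ring
      rw [this, hφodd]
      ring
    · have hadj' : ¬ G.Adj d c := fun h => hadj h.symm
      simp [hadj, hadj']
  have hpos : 0 < ∑ c : Fin n, ∑ d : Fin n,
      (if G.Adj c d then (x d - x c) * φ c d (x d - x c) else 0) := by
    obtain ⟨c, d, hadj, hne⟩ := hedge
    have hterm : ∀ a b : Fin n, 0 ≤ (if G.Adj a b then (x b - x a) * φ a b (x b - x a) else 0) := by
      intro a b
      split
      · rename_i h
        by_cases hz : x b - x a = 0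
        · rw [hz]; simp
        · exact le_of_lt (hsign a b h _ hz (hx a b h))
      · exact le_refl 0
    refine Finset.sum_pos' (fun a _ => Finset.sum_nonneg fun b _ => hterm a b) ⟨c, Finset.mem_univ c, ?_⟩
    refine Finset.sum_pos' (fun b _ => hterm c b) ⟨d, Finset.mem_univ d, ?_⟩
    have hz : x d - x c ≠ 0 := sub_ne_zero.mpr hne
    simp only [hadj, if_true]
    exact hsign c d hadj _ hz (hx c d hadj)
  have hTS : (∑ c : Fin n, ∑ d : Fin n, (if G.Adj c d then φ c d (x d - x c) * x d else 0)) - S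
      = ∑ c : Fin n, ∑ d : Fin n,
        (if G.Adj c d then (x d - x c) * φ c d (x d - x c) else 0) := by
    rw [hS, ← Finset.sum_sub_distrib]
    refine Finset.sum_congr rfl fun c _ => ?_
    rw [← Finset.sum_sub_distrib]
    refine Finset.sum_congr rfl fun d _ => ?_
    split <;> ring
  rw [h1]
  linarith
end

section
/- Let f : ℝⁿ → ℝⁿ be f_c(x) = ∑_{d ∈ I(c)} φ_{cd}(x_d − x_c) with a connected symmetric graph and odd couplings φ_{cd} = φ_{dc} satisfying α·φ_{cd}(α) > 0 for 0 < |α| < ε. Then for any x with |x_d − x_c| < ε for all edges, f(x) = 0 if and only if x lies on the total synchrony subspace Δ = {x : x₁ = x₂ = ⋯ = xₙ}. -/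
open scoped BigOperators

/-- For a connected symmetric graph with odd couplings satisfying the sign condition
`α·φ_{cd}(α) > 0` for `0 < |α| < ε`: for any `x` with `|x_d - x_c| < ε` on all edges,
`f(x) = 0` iff `x` lies on the total synchrony subspace `{x : x₁ = ⋯ = xₙ}`. -/
theorem stmt_13 (n : ℕ) (G : SimpleGraph (Fin n)) [DecidableRel G.Adj]
    (hconn : G.Connected)
    (φ : Fin n → Fin n → ℝ → ℝ)
    (hφcont : ∀ c d, Continuous (φ c d))
    (hφodd : ∀ (c d : Fin n) (t : ℝ), φ c d (-t) = -φ c d t)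
    (hφsymm : ∀ c d, φ c d = φ d c)
    (ε : ℝ) (hε : 0 < ε)
    (hsign : ∀ c d : Fin n, G.Adj c d → ∀ α : ℝ, α ≠ 0 → |α| < ε → 0 < α * φ c d α)
    (x : Fin n → ℝ)
    (hx : ∀ c d : Fin n, G.Adj c d → |x d - x c| < ε) :
    (∀ c : Fin n, ∑ d ∈ G.neighborFinset c, φ c d (x d - x c) = 0) ↔
      ∀ c d : Fin n, x c = x d := by
  have hφ0 : ∀ c d : Fin n, φ c d 0 = 0 := by
    intro c d
    have := hφodd c d 0
    simp at this
    linarith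
  constructor
  · intro hf
    haveI : Nonempty (Fin n) := hconn.nonempty
    obtain ⟨c0, hc0⟩ := Finite.exists_max x
    -- step lemma: any neighbor of a maximizer has equal value
    have step : ∀ u : Fin n, (∀ a, x a ≤ x u) → ∀ v : Fin n, G.Adj u v → x v = x u := by
      intro u hu v huv
      have hnonpos : ∀ d ∈ G.neighborFinset u, φ u d (x d - x u) ≤ 0 := by
        intro d hd
        rw [SimpleGraph.mem_neighborFinset] at hd
        rcases eq_or_ne (x d - x u) 0 with h0 | h0
        · rw [h0, hφ0]
        · have hlt : x d - x u < 0 := lt_of_le_of_ne (by linarith [hu d]) h0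
          have := hsign u d hd _ h0 (hx u d hd)
          rcases mul_pos_iff.mp this with ⟨h1, _⟩ | ⟨_, h2⟩
          · linarith
          · linarith
      have hzero : ∀ d ∈ G.neighborFinset u, φ u d (x d - x u) = 0 :=
        (Finset.sum_eq_zero_iff_of_nonpos hnonpos).mp (hf u)
      have hv := hzero v ((SimpleGraph.mem_neighborFinset _ _ _).mpr huv)
      rcases eq_or_ne (x v - x u) 0 with h0 | h0
      · linarith
      · have := hsign u v huv _ h0 (hx u v huv)
        rw [hv, mul_zero] at this
        linarith
    have key : ∀ (u v : Fin n) (w : G.Walk u v), x u = x c0 → x v = x c0 := by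
      intro u v w
      induction w with
      | nil => exact fun h => h
      | cons h p ih =>
        intro hu
        apply ih
        have := step _ (fun a => hu ▸ hc0 a) _ h
        rw [this, hu]
    intro c d
    obtain ⟨wc⟩ := hconn c0 c
    obtain ⟨wd⟩ := hconn c0 d
    rw [key _ _ wc rfl, key _ _ wd rfl]
  · intro heq c
    apply Finset.sum_eq_zero
    intro d _
    rw [show x d - x c = 0 by rw [heq c d]; ring]
    exact hφ0 c d
end

section
/- Let ⋈ be a balanced equivalence relation on the vertex set {0,1,…,n−1} of the cyclic nearest-neighbor ring graph (edges between i and i±1 mod n), n ≥ 3, meaning that c ⋈ d implies either (c−1 ⋈ d−1 and c+1 ⋈ d+1) or (c−1 ⋈ d+1 and c+1 ⋈ d−1), all indices mod n. Then there exists a subgroup Σ of the dihedral group Dₙ acting on ℤ/nℤ such that c ⋈ d if and only if some element of Σ maps c to d. -/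
/-!
Let `S` be the set of dihedral permutations `σ` with `k ⋈ σ k` for every `k`; since `⋈` is an
equivalence relation, `S` is a subgroup. Balancedness says that the two neighbours of `c` are
matched with the two neighbours of `d` whenever `c ⋈ d`, so once one neighbour pair is known to be
matched, transitivity forces the other pair as well. Hence if `k ⋈ σ k` holds at two adjacent
points, it propagates around the whole ring. Given `c ⋈ d`, balancedness at `c` provides the second
adjacent point for the rotation or the reflection taking `c` to `d`, which therefore lies in `S`.
-/

section Dihedral

variable {G : Type*} [AddCommGroup G]

def IsDihedral (σ : G → G) : Prop :=
  (∃ a : G, ∀ k, σ k = k + a) ∨ ∃ s : G, ∀ k, σ k = s - k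

theorem IsDihedral.comp {σ τ : G → G} (hσ : IsDihedral σ) (hτ : IsDihedral τ) :
    IsDihedral (σ ∘ τ) := by
  rcases hσ with ⟨a, ha⟩ | ⟨s, hs⟩ <;> rcases hτ with ⟨b, hb⟩ | ⟨t, ht⟩
  · exact Or.inl ⟨b + a, fun k => by simp only [Function.comp, ha, hb]; abel⟩
  · exact Or.inr ⟨t + a, fun k => by simp only [Function.comp, ha, ht]; abel⟩
  · exact Or.inr ⟨s - b, fun k => by simp only [Function.comp, hs, hb]; abel⟩
  · exact Or.inl ⟨s - t, fun k => by simp only [Function.comp, hs, ht]; abel⟩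

theorem IsDihedral.perm_inv {σ : Equiv.Perm G} (hσ : IsDihedral σ) : IsDihedral ⇑σ⁻¹ := by
  rcases hσ with ⟨a, ha⟩ | ⟨s, hs⟩
  · refine Or.inl ⟨-a, fun k => σ.injective ?_⟩
    rw [Equiv.Perm.inv_def, Equiv.apply_symm_apply, ha]
    abel
  · refine Or.inr ⟨s, fun k => σ.injective ?_⟩
    rw [Equiv.Perm.inv_def, Equiv.apply_symm_apply, hs]
    abel

variable (G) in
def dihedralSubgroup : Subgroup (Equiv.Perm G) where
  carrier := {σ | IsDihedral ⇑σ}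
  mul_mem' := IsDihedral.comp
  one_mem' := Or.inl ⟨0, fun k => (add_zero k).symm⟩
  inv_mem' := IsDihedral.perm_inv

end Dihedral

def Equivalence.permSubgroup {α : Type*} {r : α → α → Prop} (hr : Equivalence r) :
    Subgroup (Equiv.Perm α) where
  carrier := {σ | ∀ k, r k (σ k)}
  mul_mem' hσ hτ k := hr.trans (hτ k) (hσ _)
  one_mem' := hr.refl
  inv_mem' {σ} hσ k := hr.symm <| by simpa using hσ (σ⁻¹ k)

namespace ZMod

variable {n : ℕ}

theorem forall_of_add_one_of_sub_one {p : ZMod n → Prop} (c : ZMod n) (hc : p c)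
    (hadd : ∀ k, p k → p (k + 1)) (hsub : ∀ k, p k → p (k - 1)) (k : ZMod n) : p k := by
  obtain ⟨m, hm⟩ := intCast_surjective (k - c)
  have hcm : ∀ m : ℤ, p (c + m) := by
    intro m
    induction m using Int.induction_on with
    | zero => simpa using hc
    | succ i ih => simpa [add_assoc] using hadd _ ih
    | pred i ih => simpa [add_sub_assoc] using hsub _ ih
  simpa [hm] using hcm m

def AreNeighbors (c p q : ZMod n) : Prop :=
  p = c - 1 ∧ q = c + 1 ∨ p = c + 1 ∧ q = c - 1

theorem _root_.IsDihedral.areNeighbors {σ : ZMod n → ZMod n} (hσ : IsDihedral σ)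
    {c p q : ZMod n} (h : AreNeighbors c p q) : AreNeighbors (σ c) (σ p) (σ q) := by
  rcases hσ with ⟨a, ha⟩ | ⟨s, hs⟩ <;> rcases h with ⟨rfl, rfl⟩ | ⟨rfl, rfl⟩
  · exact Or.inl ⟨by rw [ha, ha]; ring, by rw [ha, ha]; ring⟩
  · exact Or.inr ⟨by rw [ha, ha]; ring, by rw [ha, ha]; ring⟩
  · exact Or.inr ⟨by rw [hs, hs]; ring, by rw [hs, hs]; ring⟩
  · exact Or.inl ⟨by rw [hs, hs]; ring, by rw [hs, hs]; ring⟩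

def Balanced (r : ZMod n → ZMod n → Prop) : Prop :=
  ∀ c d : ZMod n, r c d →
    (r (c - 1) (d - 1) ∧ r (c + 1) (d + 1)) ∨ (r (c - 1) (d + 1) ∧ r (c + 1) (d - 1))

variable {r : ZMod n → ZMod n → Prop}

theorem Balanced.rel_of_rel (hr : Equivalence r) (hb : Balanced r) {c d p q x y : ZMod n}
    (hcd : r c d) (hpq : AreNeighbors c p q) (hxy : AreNeighbors d x y) (hpx : r p x) :
    r q y := by
  rcases hb c d hcd with ⟨h₁, h₂⟩ | ⟨h₁, h₂⟩ <;> rcases hpq with ⟨rfl, rfl⟩ | ⟨rfl, rfl⟩ <;>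
    rcases hxy with ⟨rfl, rfl⟩ | ⟨rfl, rfl⟩ <;> first
      | assumption
      | exact hr.trans h₁ (hr.trans (hr.symm hpx) h₂)
      | exact hr.trans h₂ (hr.trans (hr.symm hpx) h₁)

theorem Balanced.rel_apply (hr : Equivalence r) (hb : Balanced r) {σ : ZMod n → ZMod n}
    (hσ : IsDihedral σ) {c : ZMod n} (h₀ : r c (σ c)) (h₁ : r (c + 1) (σ (c + 1))) (k : ZMod n) :
    r k (σ k) := by
  refine (forall_of_add_one_of_sub_one (p := fun k => r k (σ k) ∧ r (k + 1) (σ (k + 1)))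
    c ⟨h₀, h₁⟩ ?_ ?_ k).1
  · rintro k ⟨hk, hk₁⟩
    have hnb : AreNeighbors (k + 1) k (k + 1 + 1) := Or.inl ⟨(add_sub_cancel_right k 1).symm, rfl⟩
    exact ⟨hk₁, hb.rel_of_rel hr hk₁ hnb (hσ.areNeighbors hnb) hk⟩
  · rintro k ⟨hk, hk₁⟩
    have hnb : AreNeighbors k (k + 1) (k - 1) := Or.inr ⟨rfl, rfl⟩
    exact ⟨hb.rel_of_rel hr hk hnb (hσ.areNeighbors hnb) hk₁, by rwa [sub_add_cancel]⟩

end ZMod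

theorem stmt_15_general (n : ℕ) (r : ZMod n → ZMod n → Prop)
    (hequiv : Equivalence r)
    (hbal : ∀ c d : ZMod n, r c d →
      (r (c - 1) (d - 1) ∧ r (c + 1) (d + 1)) ∨
        (r (c - 1) (d + 1) ∧ r (c + 1) (d - 1))) :
    ∃ S : Subgroup (Equiv.Perm (ZMod n)),
      (∀ σ ∈ S, (∃ a : ZMod n, ∀ k, σ k = k + a) ∨ (∃ s : ZMod n, ∀ k, σ k = s - k)) ∧
      (∀ c d : ZMod n, r c d ↔ ∃ σ ∈ S, σ c = d) := by
  have hb : ZMod.Balanced r := hbal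
  refine ⟨dihedralSubgroup (ZMod n) ⊓ hequiv.permSubgroup, fun σ hσ => hσ.1,
    fun c d => ⟨fun hcd => ?_, fun ⟨σ, hσ, hσc⟩ => hσc ▸ hσ.2 c⟩⟩
  rcases hbal c d hcd with ⟨-, hadd⟩ | ⟨-, hsub⟩
  · have hσ : IsDihedral (Equiv.addRight (d - c) : ZMod n → ZMod n) := Or.inl ⟨d - c, fun _ => rfl⟩
    have hσc : Equiv.addRight (d - c) c = d := add_sub_cancel c d
    refine ⟨_, ⟨hσ, hb.rel_apply hequiv hσ (c := c) ?_ ?_⟩, hσc⟩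
    · rwa [hσc]
    · simpa [add_right_comm] using hadd
  · have hσ : IsDihedral (Equiv.subLeft (c + d) : ZMod n → ZMod n) := Or.inr ⟨c + d, fun _ => rfl⟩
    have hσc : Equiv.subLeft (c + d) c = d := add_sub_cancel_left c d
    refine ⟨_, ⟨hσ, hb.rel_apply hequiv hσ (c := c) ?_ ?_⟩, hσc⟩
    · rwa [hσc]
    · simpa [sub_add_eq_sub_sub] using hsub

/-- Every balanced equivalence relation on the nearest-neighbor ring on `ℤ/nℤ` (`n ≥ 3`)
comes from a subgroup of the dihedral group: there is a subgroup `Σ` of permutations of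
`ℤ/nℤ`, each element of which is a rotation `k ↦ k + r` or a reflection `k ↦ s - k`,
such that `c ⋈ d` iff some element of `Σ` maps `c` to `d`. -/
theorem stmt_15 (n : ℕ) (hn : 3 ≤ n) (r : ZMod n → ZMod n → Prop)
    (hequiv : Equivalence r)
    (hbal : ∀ c d : ZMod n, r c d →
      (r (c - 1) (d - 1) ∧ r (c + 1) (d + 1)) ∨
        (r (c - 1) (d + 1) ∧ r (c + 1) (d - 1))) :
    ∃ S : Subgroup (Equiv.Perm (ZMod n)),
      (∀ σ ∈ S, (∃ a : ZMod n, ∀ k, σ k = k + a) ∨ (∃ s : ZMod n, ∀ k, σ k = s - k)) ∧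
      (∀ c d : ZMod n, r c d ↔ ∃ σ ∈ S, σ c = d) :=
  stmt_15_general n r hequiv hbal
end

section
/- Let ⋈ be an equivalence relation on ℤ/nℤ (n ≥ 3) satisfying: c ⋈ d implies (c−1 ⋈ d−1 and c+1 ⋈ d+1) or (c−1 ⋈ d+1 and c+1 ⋈ d−1). If there exist three consecutive vertices c−1, c, c+1 that are pairwise ⋈-equivalent, then all vertices of ℤ/nℤ are ⋈-equivalent. -/
/-- If an equivalence relation on `ℤ/nℤ` (`n ≥ 3`) satisfies the balanced condition for
the nearest-neighbor ring and three consecutive vertices are pairwise equivalent, then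
all vertices are equivalent. -/
theorem stmt_16 (n : ℕ) (hn : 3 ≤ n) (r : ZMod n → ZMod n → Prop)
    (hequiv : Equivalence r)
    (hbal : ∀ c d : ZMod n, r c d →
      (r (c - 1) (d - 1) ∧ r (c + 1) (d + 1)) ∨
        (r (c - 1) (d + 1) ∧ r (c + 1) (d - 1)))
    (c : ZMod n)
    (h1 : r (c - 1) c) (h2 : r c (c + 1)) (h3 : r (c - 1) (c + 1)) :
    ∀ a b : ZMod n, r a b := by
  have : NeZero n := ⟨by omega⟩
  have key : ∀ k : ℕ, r c (c + (k : ZMod n)) := by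
    intro k
    induction k with
    | zero => simpa using hequiv.refl c
    | succ k ih =>
      have e : (c + ((k + 1 : ℕ) : ZMod n)) = c + (k : ZMod n) + 1 := by
        push_cast; ring
      rw [e]
      rcases hbal c (c + (k : ZMod n)) ih with ⟨_, h⟩ | ⟨h, _⟩
      · exact hequiv.trans h2 h
      · exact hequiv.trans (hequiv.symm h1) h
  have all : ∀ a : ZMod n, r c a := by
    intro a
    have := key (a - c).val
    rwa [ZMod.natCast_val, ZMod.cast_id, add_sub_cancel] at this
  intro a b
  exact hequiv.trans (hequiv.symm (all a)) (all b)
end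

section
/- Let ⋈ be an equivalence relation on ℤ/nℤ satisfying the balanced condition for the nearest-neighbor ring. If c ⋈ d with c−1 ⋈ d−1 and c+1 ⋈ d+1, and m = d − c ≠ 0, then c + j ⋈ c + j + m for all j ∈ ℤ; consequently ⋈ is invariant under the rotation by m, and m generates a subgroup whose orbits refine the ⋈-classes. -/
/-!
Write `r` for `⋈`. Applying the balanced condition to `c + 1 ⋈ d + 1`, the crossed alternative
would give `c + 2 ⋈ d ⋈ c ⋈ d + 2`, so in either case `c + 2 ⋈ d + 2`. Hence two consecutive
parallel pairs propagate to the next one, forwards and (by the symmetry `1 ↦ -1` of the condition)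
backwards, and `c + j ⋈ d + j = c + j + m` for every `j`. Every residue has this form, so every
`a` is related to `a + m`, which gives rotation invariance and `a ⋈ a + z • m`.
-/

variable {G : Type*} [AddCommGroup G]

/-- The balanced condition of the nearest-neighbour ring, for steps of size `s`. -/
def IsBalanced (r : G → G → Prop) (s : G) : Prop :=
  ∀ a b, r a b → (r (a - s) (b - s) ∧ r (a + s) (b + s)) ∨ (r (a - s) (b + s) ∧ r (a + s) (b - s))

namespace IsBalanced

variable {r : G → G → Prop} {s : G}

theorem neg (h : IsBalanced r s) : IsBalanced r (-s) := by
  intro a b hab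
  simp only [sub_neg_eq_add, ← sub_eq_add_neg]
  rcases h a b hab with ⟨h₁, h₂⟩ | ⟨h₁, h₂⟩
  · exact .inl ⟨h₂, h₁⟩
  · exact .inr ⟨h₂, h₁⟩

theorem add_add (hr : Equivalence r) (h : IsBalanced r s) {a b : G} (h₀ : r a b)
    (h₁ : r (a + s) (b + s)) : r (a + s + s) (b + s + s) := by
  rcases h _ _ h₁ with ⟨-, h₂⟩ | ⟨ha, hb⟩
  · exact h₂
  · rw [add_sub_cancel_right] at ha hb
    exact hr.trans hb (hr.trans (hr.symm h₀) ha)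

theorem add_nsmul (hr : Equivalence r) (h : IsBalanced r s) {a b : G} (h₀ : r a b)
    (h₁ : r (a + s) (b + s)) (k : ℕ) : r (a + k • s) (b + k • s) := by
  suffices r (a + k • s) (b + k • s) ∧ r (a + k • s + s) (b + k • s + s) from this.1
  induction k with
  | zero => simpa using ⟨h₀, h₁⟩
  | succ k ih =>
    simp only [succ_nsmul, ← add_assoc]
    exact ⟨ih.2, h.add_add hr ih.1 ih.2⟩

theorem add_zsmul (hr : Equivalence r) (h : IsBalanced r s) {a b : G} (h₀ : r a b)
    (hm : r (a - s) (b - s)) (hp : r (a + s) (b + s)) (k : ℤ) :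
    r (a + k • s) (b + k • s) := by
  cases k with
  | ofNat k => simpa using h.add_nsmul hr h₀ hp k
  | negSucc k =>
    rw [sub_eq_add_neg, sub_eq_add_neg] at hm
    rw [negSucc_zsmul, ← smul_neg]
    exact h.neg.add_nsmul hr h₀ hm (k + 1)

end IsBalanced

theorem Equivalence.rel_add_zsmul {r : G → G → Prop} (hr : Equivalence r) {m : G}
    (h : ∀ a, r a (a + m)) (a : G) (z : ℤ) : r a (a + z • m) := by
  induction z using Int.induction_on with
  | zero => simpa using hr.refl a
  | succ k ih => simpa [add_zsmul, ← add_assoc] using hr.trans ih (h _)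
  | pred k ih =>
    have h' := h (a + (-(k : ℤ) - 1) • m)
    rw [add_assoc, ← add_one_zsmul, sub_add_cancel] at h'
    exact hr.trans ih (hr.symm h')

theorem stmt_17_general (n : ℕ) (r : ZMod n → ZMod n → Prop)
    (hequiv : Equivalence r)
    (hbal : ∀ c d : ZMod n, r c d →
      (r (c - 1) (d - 1) ∧ r (c + 1) (d + 1)) ∨
        (r (c - 1) (d + 1) ∧ r (c + 1) (d - 1)))
    (c d : ZMod n) (hcd : r c d)
    (hm1 : r (c - 1) (d - 1)) (hp1 : r (c + 1) (d + 1))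
    (m : ZMod n) (hmdef : m = d - c) :
    (∀ j : ℤ, r (c + (j : ZMod n)) (c + (j : ZMod n) + m)) ∧
      (∀ a b : ZMod n, r a b → r (a + m) (b + m)) ∧
      (∀ (a : ZMod n) (z : ℤ), r a (a + z • m)) := by
  have hshift : ∀ a, r a (a + m) := by
    intro a
    obtain ⟨k, hk⟩ := ZMod.intCast_surjective (a - c)
    have h := IsBalanced.add_zsmul hequiv hbal hcd hm1 hp1 k
    rw [zsmul_one, hk, add_sub_cancel] at h
    rwa [hmdef, add_sub_left_comm]
  exact ⟨fun j => hshift _, fun a b hab => hequiv.trans (hequiv.symm (hshift a))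
    (hequiv.trans hab (hshift b)), hequiv.rel_add_zsmul hshift⟩

/-- If `c ⋈ d` with `c - 1 ⋈ d - 1` and `c + 1 ⋈ d + 1` in a balanced relation on the
ring `ℤ/nℤ`, and `m = d - c ≠ 0`, then `c + j ⋈ c + j + m` for all `j ∈ ℤ`; consequently
`⋈` is invariant under rotation by `m` and the orbits of the rotation by `m` refine the
`⋈`-classes. -/
theorem stmt_17 (n : ℕ) (hn : 3 ≤ n) (r : ZMod n → ZMod n → Prop)
    (hequiv : Equivalence r)
    (hbal : ∀ c d : ZMod n, r c d →
      (r (c - 1) (d - 1) ∧ r (c + 1) (d + 1)) ∨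
        (r (c - 1) (d + 1) ∧ r (c + 1) (d - 1)))
    (c d : ZMod n) (hcd : r c d)
    (hm1 : r (c - 1) (d - 1)) (hp1 : r (c + 1) (d + 1))
    (m : ZMod n) (hmdef : m = d - c) (hm0 : m ≠ 0) :
    (∀ j : ℤ, r (c + (j : ZMod n)) (c + (j : ZMod n) + m)) ∧
      (∀ a b : ZMod n, r a b → r (a + m) (b + m)) ∧
      (∀ (a : ZMod n) (z : ℤ), r a (a + z • m)) :=
  stmt_17_general n r hequiv hbal c d hcd hm1 hp1 m hmdef
end

section
/- For the Kuramoto system ẋ_i = ∑_{j=−2,j≠0}^{2} sin(x_{i−j} − x_i) on six oscillators (indices mod 6), every point of the form (0, a, π, 0, −a, π), a ∈ ℝ, is an equilibrium. -/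
open Real

/-- Every point of the form `(0, a, π, 0, -a, π)` is an equilibrium of the Kuramoto
system with `G₆` coupling `ẋ_i = ∑_{j = -2, j ≠ 0}^{2} sin(x_{i-j} - x_i)`, indices
mod 6. -/
theorem stmt_19 (a : ℝ) :
    ∀ i : Fin 6,
      sin ((![0, a, π, 0, -a, π] : Fin 6 → ℝ) (i - 2) - ![0, a, π, 0, -a, π] i) +
        sin ((![0, a, π, 0, -a, π] : Fin 6 → ℝ) (i - 1) - ![0, a, π, 0, -a, π] i) +
        sin ((![0, a, π, 0, -a, π] : Fin 6 → ℝ) (i + 1) - ![0, a, π, 0, -a, π] i) +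
        sin ((![0, a, π, 0, -a, π] : Fin 6 → ℝ) (i + 2) - ![0, a, π, 0, -a, π] i) = 0 := by
  have key : ∀ x : ℝ, sin (π - x) + sin (0 - x) + sin (π - x) + sin (0 - x) = 0 := by
    intro x; rw [sin_pi_sub]; simp [sin_neg]
  intro i
  match i with
  | 0 => show sin (-a - 0) + sin (π - 0) + sin (a - 0) + sin (π - 0) = 0
         simp [sin_neg]
  | 1 => show sin (π - a) + sin (0 - a) + sin (π - a) + sin (0 - a) = 0
         exact key a
  | 2 => show sin (0 - π) + sin (a - π) + sin (0 - π) + sin (-a - π) = 0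
         simp [sin_sub, sin_neg, cos_neg]
  | 3 => show sin (a - 0) + sin (π - 0) + sin (-a - 0) + sin (π - 0) = 0
         simp [sin_neg]
  | 4 => show sin (π - -a) + sin (0 - -a) + sin (π - -a) + sin (0 - -a) = 0
         exact key (-a)
  | 5 => show sin (0 - π) + sin (-a - π) + sin (0 - π) + sin (a - π) = 0
         simp [sin_sub, sin_neg, cos_neg]
end
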